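/- Theorem (Section 3.3, stationary object hit probability for variable sizes). In the discrete-time caching model with variable-size objects, let (C_k) be a non-anticipative integral caching policy (C_k : Ω → Finset (Fin n) is ℱ_{k-1}-measurable with ∑_{i ∈ C_k(ω)} s_i ≤ B for all ω), and let Φ_k(ω) = sup{ ∑_i y_i·p_k(i)(ω) : 0 ≤ y_i ≤ 1, ∑_i s_i y_i ≤ B }. If there exist real constants h^π and h^HR-VC such that (1/K)·∑_{k=1}^K 1(R_k ∈ C_k) → h^π μ-almost everywhere and (1/K)·∑_{k=1}^K Φ_k → h^HR-VC μ-almost everywhere as K → ∞, then h^π ≤ h^HR-VC. -/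

import Mathlib

/-!
Because `C k` is `ℱ (k - 1)`-measurable, conditioning on `ℱ (k - 1)` turns the hit probability
`P(R k ∈ C k)` into `E[∑ i ∈ C k, p k i]`; as the indicator of `C k` is feasible for the
fractional knapsack, this is at most `E[Φ k]`. Both Cesàro averages are bounded by `1`, so by
dominated convergence their expectations converge to `hπ` and `hHRVC`, and the inequality
passes to the limit.
-/

open MeasureTheory Filter Topology

section FracKnapsack

variable {ι : Type*} [Fintype ι]

def fracKnapsackFeasible (s : ι → ℝ) (B : ℝ) : Set (ι → ℝ) :=
  {y | (∀ i, 0 ≤ y i ∧ y i ≤ 1) ∧ ∑ i, s i * y i ≤ B}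

noncomputable def fracKnapsack (s : ι → ℝ) (B : ℝ) (q : ι → ℝ) : ℝ :=
  sSup ((fun y : ι → ℝ => ∑ i, y i * q i) '' fracKnapsackFeasible s B)

variable {s : ι → ℝ} {B : ℝ}

theorem indicator_mem_fracKnapsackFeasible [DecidableEq ι] {C : Finset ι}
    (hC : ∑ i ∈ C, s i ≤ B) :
    (fun i => if i ∈ C then (1 : ℝ) else 0) ∈ fracKnapsackFeasible s B := by
  refine ⟨fun i => by dsimp only; split_ifs <;> norm_num, ?_⟩
  simpa [Finset.sum_ite_mem] using hC

theorem bddAbove_fracKnapsack_values (s : ι → ℝ) (B : ℝ) (q : ι → ℝ) :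
    BddAbove ((fun y : ι → ℝ => ∑ i, y i * q i) '' fracKnapsackFeasible s B) := by
  refine ⟨∑ i, |q i|, ?_⟩
  rintro _ ⟨y, ⟨hy, -⟩, rfl⟩
  refine Finset.sum_le_sum fun i _ => ?_
  calc y i * q i ≤ y i * |q i| := mul_le_mul_of_nonneg_left (le_abs_self _) (hy i).1
    _ ≤ |q i| := mul_le_of_le_one_left (abs_nonneg _) (hy i).2

theorem sum_le_fracKnapsack [DecidableEq ι] {C : Finset ι} (hC : ∑ i ∈ C, s i ≤ B)
    (q : ι → ℝ) : ∑ i ∈ C, q i ≤ fracKnapsack s B q := by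
  refine le_csSup_of_le (bddAbove_fracKnapsack_values s B q)
    ⟨_, indicator_mem_fracKnapsackFeasible hC, rfl⟩ (le_of_eq ?_)
  simp [Finset.sum_ite_mem]

theorem fracKnapsack_le_one {q : ι → ℝ} (hq : ∀ i, 0 ≤ q i) (hq_sum : ∑ i, q i = 1) :
    fracKnapsack s B q ≤ 1 := by
  refine Real.sSup_le ?_ zero_le_one
  rintro _ ⟨y, ⟨hy, -⟩, rfl⟩
  calc ∑ i, y i * q i ≤ ∑ i, q i := by
        gcongr with i
        exact mul_le_of_le_one_left (hq i) (hy i).2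
    _ = 1 := hq_sum

theorem lowerSemicontinuous_fracKnapsack (s : ι → ℝ) (B : ℝ) :
    LowerSemicontinuous (fracKnapsack s B) := by
  have h : fracKnapsack s B =
      fun q => ⨆ y : fracKnapsackFeasible s B, ∑ i, (y : ι → ℝ) i * q i := by
    ext q
    rw [fracKnapsack, Set.image_eq_range]
    rfl
  rw [h]
  refine lowerSemicontinuous_ciSup (fun q => ?_) fun y =>
    (by fun_prop : Continuous _).lowerSemicontinuous
  simpa only [Set.image_eq_range] using bddAbove_fracKnapsack_values s B q

end FracKnapsack

section Predictable

variable {Ω ι : Type*} {m m₀ : MeasurableSpace Ω} {μ : Measure Ω}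

theorem sum_mem_eq_sum_indicator [Fintype ι] (C : Ω → Finset ι) (f : ι → Ω → ℝ) (ω : Ω) :
    ∑ i ∈ C ω, f i ω = ∑ i, {x | i ∈ C x}.indicator (f i) ω := by
  classical
  simp [Set.indicator_apply, Finset.sum_ite_mem]

/-- On each event `{i ∈ C}`, which is `m`-measurable, `f i` and `μ[f i | m]` have the same
integral. -/
theorem integral_sum_mem_eq_of_condExp_ae_eq [Fintype ι] (hm : m ≤ m₀) [SigmaFinite (μ.trim hm)]
    {f g : ι → Ω → ℝ} (hf : ∀ i, Integrable (f i) μ) (hg : ∀ i, μ[f i | m] =ᵐ[μ] g i)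
    {C : Ω → Finset ι} (hC : ∀ i, MeasurableSet[m] {ω | i ∈ C ω}) :
    ∫ ω, ∑ i ∈ C ω, f i ω ∂μ = ∫ ω, ∑ i ∈ C ω, g i ω ∂μ := by
  have h_split : ∀ h : ι → Ω → ℝ, (∀ i, Integrable (h i) μ) →
      ∫ ω, ∑ i ∈ C ω, h i ω ∂μ = ∑ i, ∫ ω in {x | i ∈ C x}, h i ω ∂μ := by
    intro h hh
    simp_rw [sum_mem_eq_sum_indicator C h]
    rw [integral_finsetSum _ fun i _ => (hh i).indicator (hm _ (hC i))]
    exact Finset.sum_congr rfl fun i _ => integral_indicator (hm _ (hC i))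
  have hg_int : ∀ i, Integrable (g i) μ := fun i => integrable_condExp.congr (hg i)
  rw [h_split f hf, h_split g hg_int]
  refine Finset.sum_congr rfl fun i _ => ?_
  rw [← setIntegral_condExp hm (hf i) (hC i)]
  exact setIntegral_congr_ae (hm _ (hC i)) ((hg i).mono fun ω hω _ => hω)

theorem measurableSet_mem_of_forall [Countable ι] {X : Ω → ι} {C : Ω → Finset ι}
    (hX : ∀ i, MeasurableSet[m₀] {ω | X ω = i}) (hC : ∀ i, MeasurableSet[m₀] {ω | i ∈ C ω}) :
    MeasurableSet[m₀] {ω | X ω ∈ C ω} := by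
  have h : {ω | X ω ∈ C ω} = ⋃ i, {ω | X ω = i} ∩ {ω | i ∈ C ω} := by
    ext ω
    simp
  rw [h]
  exact .iUnion fun i => (hX i).inter (hC i)

theorem integral_ite_mem_eq_integral_sum_condProb [Fintype ι] [DecidableEq ι] [IsFiniteMeasure μ]
    (hm : m ≤ m₀) [SigmaFinite (μ.trim hm)] {X : Ω → ι} (hX : ∀ i, MeasurableSet {ω | X ω = i})
    {q : Ω → ι → ℝ} (hq : ∀ i, μ[fun ω => if X ω = i then 1 else 0 | m] =ᵐ[μ] fun ω => q ω i)
    {C : Ω → Finset ι} (hC : ∀ i, MeasurableSet[m] {ω | i ∈ C ω}) :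
    ∫ ω, (if X ω ∈ C ω then 1 else 0) ∂μ = ∫ ω, ∑ i ∈ C ω, q ω i ∂μ := by
  have h_int : ∀ i, Integrable (fun ω => if X ω = i then (1 : ℝ) else 0) μ := fun i =>
    .of_bound (Measurable.ite (hX i) measurable_const measurable_const).aestronglyMeasurable 1
      (.of_forall fun ω => by split_ifs <;> norm_num)
  simp_rw [← Finset.sum_ite_eq (C _) (X _) fun _ => (1 : ℝ)]
  exact integral_sum_mem_eq_of_condExp_ae_eq hm h_int hq hC

end Predictable

section Cesaro

theorem abs_cesaro_le {g : ℕ → ℝ} {c : ℝ} (hg : ∀ k, |g k| ≤ c) (K : ℕ) :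
    |(K : ℝ)⁻¹ * ∑ k ∈ Finset.Icc 1 K, g k| ≤ c := by
  rcases K.eq_zero_or_pos with rfl | hK
  · simpa using (abs_nonneg _).trans (hg 0)
  have hK' : (0 : ℝ) < K := Nat.cast_pos.mpr hK
  rw [abs_mul, abs_inv, Nat.abs_cast, inv_mul_le_iff₀ hK']
  calc |∑ k ∈ Finset.Icc 1 K, g k| ≤ ∑ k ∈ Finset.Icc 1 K, |g k| := Finset.abs_sum_le_sum_abs _ _
    _ ≤ ∑ _k ∈ Finset.Icc 1 K, c := Finset.sum_le_sum fun k _ => hg k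
    _ = K * c := by simp

variable {Ω : Type*} {m₀ : MeasurableSpace Ω} {μ : Measure Ω} [IsProbabilityMeasure μ]

theorem tendsto_cesaro_integral_of_ae_tendsto {F : ℕ → Ω → ℝ} {c L : ℝ}
    (hF_meas : ∀ k, 1 ≤ k → AEStronglyMeasurable (F k) μ) (hF_bound : ∀ k ω, |F k ω| ≤ c)
    (hF_lim : ∀ᵐ ω ∂μ,
      Tendsto (fun K : ℕ => (K : ℝ)⁻¹ * ∑ k ∈ Finset.Icc 1 K, F k ω) atTop (𝓝 L)) :
    Tendsto (fun K : ℕ => (K : ℝ)⁻¹ * ∑ k ∈ Finset.Icc 1 K, ∫ ω, F k ω ∂μ) atTop (𝓝 L) := by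
  have hF_int : ∀ k, 1 ≤ k → Integrable (F k) μ := fun k hk =>
    .of_bound (hF_meas k hk) c (.of_forall (hF_bound k))
  have h_avg : ∀ K : ℕ, ∫ ω, (K : ℝ)⁻¹ * ∑ k ∈ Finset.Icc 1 K, F k ω ∂μ
      = (K : ℝ)⁻¹ * ∑ k ∈ Finset.Icc 1 K, ∫ ω, F k ω ∂μ := fun K => by
    rw [integral_const_mul,
      integral_finsetSum _ fun k hk => hF_int k (Finset.mem_Icc.mp hk).1]
  have h_meas : ∀ K : ℕ, AEStronglyMeasurable
      (fun ω => (K : ℝ)⁻¹ * ∑ k ∈ Finset.Icc 1 K, F k ω) μ := fun K =>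
    (Finset.aestronglyMeasurable_fun_sum _
      fun k hk => hF_meas k (Finset.mem_Icc.mp hk).1).const_mul _
  have h_bound : ∀ K : ℕ, ∀ᵐ ω ∂μ, ‖(K : ℝ)⁻¹ * ∑ k ∈ Finset.Icc 1 K, F k ω‖ ≤ c := fun K =>
    .of_forall fun ω => abs_cesaro_le (fun k => hF_bound k ω) K
  simpa [h_avg] using tendsto_integral_of_dominated_convergence (fun _ => c) h_meas
    (integrable_const c) h_bound hF_lim

end Cesaro

theorem hr_vc_stationary_hit_probability_general
    {Ω : Type*} {𝒜 : MeasurableSpace Ω} (μ : Measure Ω) [IsProbabilityMeasure μ]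
    (ℱ : ℕ → MeasurableSpace Ω) (hℱ_le : ∀ k, ℱ k ≤ 𝒜)
    (n : ℕ) (s : Fin n → ℝ) (B : ℝ)
    (R : ℕ → Ω → Fin n) (hR : ∀ k, Measurable[ℱ k] (R k))
    (p : ℕ → Ω → Fin n → ℝ)
    (hp_meas : ∀ k, 1 ≤ k → Measurable[ℱ (k - 1)] (p k))
    (hp_nonneg : ∀ k ω i, 0 ≤ p k ω i)
    (hp_sum : ∀ k ω, ∑ i, p k ω i = 1)
    (hp_cond : ∀ k, 1 ≤ k → ∀ i : Fin n,
      μ[(fun ω => if R k ω = i then (1 : ℝ) else 0) | ℱ (k - 1)]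
        =ᵐ[μ] fun ω => p k ω i)
    -- the fractional-knapsack value with profits `p k ω i` and weights `s i`
    (Φ : ℕ → Ω → ℝ)
    (hΦ : ∀ k ω, Φ k ω = sSup ((fun y : Fin n → ℝ => ∑ i, y i * p k ω i) ''
      {y | (∀ i, 0 ≤ y i ∧ y i ≤ 1) ∧ ∑ i, s i * y i ≤ B}))
    -- a non-anticipative integral caching policy
    (C : ℕ → Ω → Finset (Fin n))
    (hC_meas : ∀ k, 1 ≤ k → ∀ i : Fin n, MeasurableSet[ℱ (k - 1)] {ω | i ∈ C k ω})
    (hC_cap : ∀ k ω, ∑ i ∈ C k ω, s i ≤ B)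
    -- existence of the almost-sure Cesàro limits
    (hπ hHRVC : ℝ)
    (hπ_lim : ∀ᵐ ω ∂μ, Tendsto
      (fun K : ℕ => (K : ℝ)⁻¹ * ∑ k ∈ Finset.Icc 1 K, if R k ω ∈ C k ω then (1 : ℝ) else 0)
      atTop (𝓝 hπ))
    (hHRVC_lim : ∀ᵐ ω ∂μ, Tendsto
      (fun K : ℕ => (K : ℝ)⁻¹ * ∑ k ∈ Finset.Icc 1 K, Φ k ω)
      atTop (𝓝 hHRVC)) :
    hπ ≤ hHRVC := by
  have hΦ_ge : ∀ k ω, ∑ i ∈ C k ω, p k ω i ≤ Φ k ω := fun k ω =>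
    (sum_le_fracKnapsack (hC_cap k ω) _).trans_eq (hΦ k ω).symm
  have hΦ_bound : ∀ k ω, |Φ k ω| ≤ 1 := fun k ω => abs_le.mpr
    ⟨by linarith [hΦ_ge k ω, Finset.sum_nonneg fun i (_ : i ∈ C k ω) => hp_nonneg k ω i],
      (hΦ k ω).trans_le (fracKnapsack_le_one (hp_nonneg k ω) (hp_sum k ω))⟩
  have hΦ_meas : ∀ k, 1 ≤ k → Measurable (Φ k) := fun k hk => by
    rw [funext (hΦ k)]
    exact (lowerSemicontinuous_fracKnapsack s B).measurable.comp
      ((hp_meas k hk).mono (hℱ_le _) le_rfl)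
  have hR_eq : ∀ k i, MeasurableSet {ω | R k ω = i} := fun k i =>
    hℱ_le k _ (hR k (measurableSet_singleton i))
  have hhit_meas : ∀ k, 1 ≤ k → Measurable fun ω => if R k ω ∈ C k ω then (1 : ℝ) else 0 :=
    fun k hk => .ite (measurableSet_mem_of_forall (hR_eq k) fun i => hℱ_le _ _ (hC_meas k hk i))
      measurable_const measurable_const
  have h_step : ∀ k, 1 ≤ k →
      ∫ ω, (if R k ω ∈ C k ω then 1 else 0) ∂μ ≤ ∫ ω, Φ k ω ∂μ := fun k hk => by
    rw [integral_ite_mem_eq_integral_sum_condProb (hℱ_le (k - 1)) (hR_eq k) (hp_cond k hk)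
      (hC_meas k hk)]
    exact integral_mono_of_nonneg
      (.of_forall fun ω => Finset.sum_nonneg fun i _ => hp_nonneg k ω i)
      (.of_bound (hΦ_meas k hk).aestronglyMeasurable 1 (.of_forall (hΦ_bound k)))
      (.of_forall (hΦ_ge k))
  exact le_of_tendsto_of_tendsto'
    (tendsto_cesaro_integral_of_ae_tendsto (fun k hk => (hhit_meas k hk).aestronglyMeasurable)
      (c := 1) (fun k ω => by split_ifs <;> norm_num) hπ_lim)
    (tendsto_cesaro_integral_of_ae_tendsto (fun k hk => (hΦ_meas k hk).aestronglyMeasurable)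
      hΦ_bound hHRVC_lim)
    fun K => mul_le_mul_of_nonneg_left
      (Finset.sum_le_sum fun k hk => h_step k (Finset.mem_Icc.mp hk).1) (by positivity)

/-- Theorem (Section 3.3): if the almost-sure Cesàro hit frequency of a non-anticipative
integral caching policy and the almost-sure Cesàro average of the fractional-knapsack
values `Φ_k` (the HR-VC per-request conditional hit probabilities) both exist, then the
stationary object hit probability of the policy is at most the HR-VC limit. -/
theorem hr_vc_stationary_hit_probability
    {Ω : Type*} {𝒜 : MeasurableSpace Ω} (μ : Measure Ω) [IsProbabilityMeasure μ]
    (ℱ : ℕ → MeasurableSpace Ω) (hℱ_le : ∀ k, ℱ k ≤ 𝒜) (hℱ_mono : Monotone ℱ)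
    (n : ℕ) (s : Fin n → ℝ) (hs : ∀ i, 0 < s i) (B : ℝ) (hB : 0 < B)
    (R : ℕ → Ω → Fin n) (hR : ∀ k, Measurable[ℱ k] (R k))
    (p : ℕ → Ω → Fin n → ℝ)
    (hp_meas : ∀ k, 1 ≤ k → Measurable[ℱ (k - 1)] (p k))
    (hp_nonneg : ∀ k ω i, 0 ≤ p k ω i)
    (hp_sum : ∀ k ω, ∑ i, p k ω i = 1)
    (hp_cond : ∀ k, 1 ≤ k → ∀ i : Fin n,
      μ[(fun ω => if R k ω = i then (1 : ℝ) else 0) | ℱ (k - 1)]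
        =ᵐ[μ] fun ω => p k ω i)
    -- the fractional-knapsack value with profits `p k ω i` and weights `s i`
    (Φ : ℕ → Ω → ℝ)
    (hΦ : ∀ k ω, Φ k ω = sSup ((fun y : Fin n → ℝ => ∑ i, y i * p k ω i) ''
      {y | (∀ i, 0 ≤ y i ∧ y i ≤ 1) ∧ ∑ i, s i * y i ≤ B}))
    -- a non-anticipative integral caching policy
    (C : ℕ → Ω → Finset (Fin n))
    (hC_meas : ∀ k, 1 ≤ k → ∀ i : Fin n, MeasurableSet[ℱ (k - 1)] {ω | i ∈ C k ω})
    (hC_cap : ∀ k ω, ∑ i ∈ C k ω, s i ≤ B)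
    -- existence of the almost-sure Cesàro limits
    (hπ hHRVC : ℝ)
    (hπ_lim : ∀ᵐ ω ∂μ, Tendsto
      (fun K : ℕ => (K : ℝ)⁻¹ * ∑ k ∈ Finset.Icc 1 K, if R k ω ∈ C k ω then (1 : ℝ) else 0)
      atTop (𝓝 hπ))
    (hHRVC_lim : ∀ᵐ ω ∂μ, Tendsto
      (fun K : ℕ => (K : ℝ)⁻¹ * ∑ k ∈ Finset.Icc 1 K, Φ k ω)
      atTop (𝓝 hHRVC)) :
    hπ ≤ hHRVC :=
  hr_vc_stationary_hit_probability_general μ ℱ hℱ_le n s B R hR p hp_meas hp_nonneg hp_sum hp_cond Φ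
    hΦ C hC_meas hC_cap hπ hHRVC hπ_lim hHRVC_lim
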